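/- Let y ∈ ℝ^N, let X be a real N×p matrix, let σ² > 0, let λ > 0, let d₁,…,d_K ∈ ℝ^p, and let F₁,…,F_L be symmetric positive semidefinite real p×p matrices with stacked matrix D̄. Then the (unnormalized) posterior kernel β ↦ exp(−‖y − Xβ‖₂²/(2σ²)) · exp(−λ(∑_{k=1}^K |dₖᵀβ| + ∑_{ℓ=1}^L √(βᵀ F_ℓ β))) is Lebesgue-integrable over ℝ^p if and only if the stacked (N+K+Lp)×p matrix obtained by stacking X on top of D̄ has rank p. -/

import Mathlib

open MeasureTheory Matrix Set

/-!
If `v ≠ 0` lies in the kernel of the stacked matrix, the kernel is invariant under `β ↦ β + v`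
(symmetry of `F ℓ` kills the cross term `vᵀ F ℓ β`), and a nowhere-vanishing function with a
nonzero period has infinitely many disjoint translated balls of equal mass, so it is not
integrable. Conversely, `(yᵢ - t)² / (2σ²) ≥ |t| - const`, so the kernel is at most
`C · exp (-min 1 λ · g β)`, where `g` is the penalty with the rows of `X` added to the `dₖ`.
This `g` is continuous and positively homogeneous, and full rank makes it positive off `0`
(positive semidefiniteness turns `βᵀ F ℓ β = 0` into `F ℓ β = 0`); compactness of the unit sphere
then gives `g β ≥ c ‖β‖`, and `exp (-c ‖β‖)` is integrable.
-/

section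
variable {E : Type*} [NormedAddCommGroup E] [NormedSpace ℝ E]

theorem integrable_exp_neg_mul_norm [FiniteDimensional ℝ E] [MeasurableSpace E] [BorelSpace E]
    (μ : Measure E) [μ.IsAddHaarMeasure] {c : ℝ} (hc : 0 < c) :
    Integrable (fun x : E => Real.exp (-(c * ‖x‖))) μ := by
  rcases subsingleton_or_nontrivial E with hE | hE
  · have : IsFiniteMeasure μ := inferInstance
    simp [Subsingleton.elim _ (0 : E)]
  · rw [integrable_fun_norm_addHaar μ (f := fun r => Real.exp (-(c * r)))]
    refine (integrableOn_rpow_mul_exp_neg_mul_rpow (s := (Module.finrank ℝ E - 1 : ℕ))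
      (neg_one_lt_zero.trans_le (Nat.cast_nonneg _)) one_pos hc).congr_fun (fun y _ => ?_)
      measurableSet_Ioi
    simp [Real.rpow_natCast]

theorem exists_pos_mul_norm_le [FiniteDimensional ℝ E] {g : E → ℝ} (hg : Continuous g)
    (hsmul : ∀ (t : ℝ) x, 0 ≤ t → g (t • x) = t * g x) (hpos : ∀ x, x ≠ 0 → 0 < g x) :
    ∃ c > 0, ∀ x, c * ‖x‖ ≤ g x := by
  have hg0 : g 0 = 0 := by simpa using hsmul 0 0 le_rfl
  rcases subsingleton_or_nontrivial E with hE | hE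
  · exact ⟨1, one_pos, fun x => by simp [Subsingleton.elim x 0, hg0]⟩
  obtain ⟨x₀, hx₀, hmin⟩ := (isCompact_sphere (0 : E) 1).exists_isMinOn
    (NormedSpace.sphere_nonempty.mpr zero_le_one) hg.continuousOn
  have hx₀ : ‖x₀‖ = 1 := by simpa using hx₀
  refine ⟨g x₀, hpos x₀ (norm_ne_zero_iff.mp (by simp [hx₀])), fun x => ?_⟩
  rcases eq_or_ne x 0 with rfl | hx
  · simp [hg0]
  have hu : ‖x‖⁻¹ • x ∈ Metric.sphere (0 : E) 1 := by
    simp [norm_smul, inv_mul_cancel₀ (norm_ne_zero_iff.mpr hx)]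
  calc g x₀ * ‖x‖ ≤ g (‖x‖⁻¹ • x) * ‖x‖ := by gcongr; exact hmin hu
    _ = g x := by
      rw [hsmul _ _ (by positivity), mul_comm, ← mul_assoc,
        mul_inv_cancel₀ (norm_ne_zero_iff.mpr hx), one_mul]

theorem not_integrable_of_periodic {F : Type*} [NormedAddCommGroup F] [MeasurableSpace E]
    [BorelSpace E] (μ : Measure E) [μ.IsAddRightInvariant] [μ.IsOpenPosMeasure] {f : E → F} {v : E}
    (hf : Function.Periodic f v) (hv : v ≠ 0) (hne : ∀ x, f x ≠ 0) : ¬ Integrable f μ := by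
  intro hint
  set r := ‖v‖ / 2
  set B : ℕ → Set E := fun n => Metric.ball (n • v) r
  have hdisj : Pairwise (Function.onFun Disjoint B) := by
    refine (pairwise_disjoint_on B).2 fun m n hmn => Metric.ball_disjoint_ball ?_
    obtain ⟨k, rfl⟩ := Nat.exists_eq_add_of_lt hmn
    rw [dist_comm, dist_eq_norm, add_assoc, add_nsmul, add_sub_cancel_left, RCLike.norm_nsmul ℝ,
      nsmul_eq_mul]
    simp only [r, add_halves]
    exact le_mul_of_one_le_left (norm_nonneg v) (by push_cast; linarith [k.cast_nonneg (α := ℝ)])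
  have hball : ∀ n, ∫⁻ x in B n, ‖f x‖ₑ ∂μ = ∫⁻ x in Metric.ball 0 r, ‖f x‖ₑ ∂μ := by
    intro n
    rw [← (measurePreserving_add_right μ (n • v)).setLIntegral_comp_preimage_emb
      (measurableEmbedding_addRight _)]
    simp [B, (hf.nsmul n) _]
  have hpos : ∫⁻ x in Metric.ball 0 r, ‖f x‖ₑ ∂μ ≠ 0 := by
    intro h
    have : μ.restrict (Metric.ball 0 r) ≠ 0 := by
      simpa using (Metric.measure_ball_pos μ 0 (half_pos (norm_pos_iff.2 hv))).ne'
    have := ae_neBot.2 this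
    obtain ⟨x, hx⟩ :=
      ((lintegral_eq_zero_iff' hint.aestronglyMeasurable.enorm.restrict).1 h).exists
    exact hne x (enorm_eq_zero.1 hx)
  have : ∫⁻ x, ‖f x‖ₑ ∂μ = ⊤ := by
    refine top_le_iff.1 ?_
    calc (⊤ : ENNReal) = ∑' n : ℕ, ∫⁻ x in B n, ‖f x‖ₑ ∂μ := by
          simp only [hball]; exact (ENNReal.tsum_const_eq_top_of_ne_zero hpos).symm
      _ = ∫⁻ x in ⋃ n, B n, ‖f x‖ₑ ∂μ :=
          (lintegral_iUnion (fun _ => measurableSet_ball) hdisj _).symm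
      _ ≤ ∫⁻ x, ‖f x‖ₑ ∂μ := setLIntegral_le_lintegral _ _
  exact hint.hasFiniteIntegral.ne this
end

theorem rank_eq_card_iff_mulVec_eq_zero {m n K : Type*} [Fintype m] [Fintype n] [Field K]
    (A : Matrix m n K) : A.rank = Fintype.card n ↔ ∀ v, A *ᵥ v = 0 → v = 0 := by
  rw [← ker_mulVecLin_eq_bot_iff, ← Submodule.finrank_eq_zero, Matrix.rank]
  have := A.mulVecLin.finrank_range_add_finrank_ker
  rw [Module.finrank_fintype_fun_eq_card] at this
  omega

theorem abs_le_sq_div_add {s : ℝ} (hs : 0 < s) (y t : ℝ) :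
    |t| ≤ (y - t) ^ 2 / (2 * s) + (|y| + s / 2) := by
  have hsq : (|y - t| - s) ^ 2 / (2 * s) = (y - t) ^ 2 / (2 * s) + s / 2 - |y - t| := by
    rw [← sq_abs (y - t)]; field_simp; ring
  have := div_nonneg (sq_nonneg (|y - t| - s)) (by positivity : (0:ℝ) ≤ 2 * s)
  linarith [abs_sub_abs_le_abs_sub t y, abs_sub_comm t y]

section StructuredPenalty
variable {n ι κ : Type*} [Fintype n] [Fintype ι] [Fintype κ]
  (d : ι → n → ℝ) (F : κ → Matrix n n ℝ)

noncomputable def structuredPenalty (β : n → ℝ) : ℝ :=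
  (∑ k, |d k ⬝ᵥ β|) + ∑ ℓ, Real.sqrt (β ⬝ᵥ F ℓ *ᵥ β)

theorem structuredPenalty_nonneg (β : n → ℝ) : 0 ≤ structuredPenalty d F β := by
  unfold structuredPenalty; positivity

theorem continuous_structuredPenalty : Continuous (structuredPenalty d F) := by
  unfold structuredPenalty
  fun_prop

theorem structuredPenalty_smul {t : ℝ} (ht : 0 ≤ t) (β : n → ℝ) :
    structuredPenalty d F (t • β) = t * structuredPenalty d F β := by
  have hq : ∀ ℓ, (t • β) ⬝ᵥ F ℓ *ᵥ (t • β) = t ^ 2 * (β ⬝ᵥ F ℓ *ᵥ β) := fun ℓ => by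
    simp only [mulVec_smul, dotProduct_smul, smul_dotProduct, smul_eq_mul]; ring
  simp only [structuredPenalty, dotProduct_smul, smul_eq_mul, abs_mul, abs_of_nonneg ht, hq,
    Real.sqrt_mul (sq_nonneg t), Real.sqrt_sq ht, ← Finset.mul_sum, mul_add]

theorem structuredPenalty_periodic (hF : ∀ ℓ, (F ℓ).IsSymm) {v : n → ℝ}
    (hd : ∀ k, d k ⬝ᵥ v = 0) (hFv : ∀ ℓ, F ℓ *ᵥ v = 0) :
    Function.Periodic (structuredPenalty d F) v := by
  intro β
  have hcross : ∀ ℓ, v ⬝ᵥ F ℓ *ᵥ β = 0 := fun ℓ => by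
    rw [dotProduct_mulVec, ← (hF ℓ).eq, vecMul_transpose, hFv, zero_dotProduct]
  have hq : ∀ ℓ, (β + v) ⬝ᵥ F ℓ *ᵥ (β + v) = β ⬝ᵥ F ℓ *ᵥ β := fun ℓ => by
    rw [mulVec_add, hFv, add_zero, add_dotProduct, hcross, add_zero]
  simp only [structuredPenalty, dotProduct_add, hd, add_zero, hq]

theorem structuredPenalty_eq_zero_iff (hF : ∀ ℓ, (F ℓ).PosSemidef) {β : n → ℝ} :
    structuredPenalty d F β = 0 ↔ (∀ k, d k ⬝ᵥ β = 0) ∧ ∀ ℓ, F ℓ *ᵥ β = 0 := by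
  have hq : ∀ ℓ, 0 ≤ β ⬝ᵥ F ℓ *ᵥ β := fun ℓ => by simpa using (hF ℓ).dotProduct_mulVec_nonneg β
  rw [structuredPenalty, add_eq_zero_iff_of_nonneg (by positivity) (by positivity),
    Finset.sum_eq_zero_iff_of_nonneg (fun _ _ => abs_nonneg _),
    Finset.sum_eq_zero_iff_of_nonneg (fun _ _ => Real.sqrt_nonneg _)]
  simp only [Finset.mem_univ, true_implies, abs_eq_zero, Real.sqrt_eq_zero (hq _)]
  refine and_congr_right' (forall_congr' fun ℓ => ?_)
  simpa using (hF ℓ).dotProduct_mulVec_zero_iff β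

end StructuredPenalty

section PosteriorKernel
variable {m n ι κ : Type*} [Fintype m] [Fintype n] [Fintype ι] [Fintype κ]
  (y : m → ℝ) (X : Matrix m n ℝ) (σ2 lam : ℝ) (d : ι → n → ℝ) (F : κ → Matrix n n ℝ)

noncomputable def posteriorKernel (β : n → ℝ) : ℝ :=
  Real.exp (-(∑ i, (y i - (X *ᵥ β) i) ^ 2) / (2 * σ2)) *
    Real.exp (-(lam * structuredPenalty d F β))

theorem posteriorKernel_pos (β : n → ℝ) : 0 < posteriorKernel y X σ2 lam d F β := by
  unfold posteriorKernel; positivity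

theorem posteriorKernel_periodic (hF : ∀ ℓ, (F ℓ).IsSymm) {v : n → ℝ}
    (hXd : ∀ i, Sum.elim X d i ⬝ᵥ v = 0) (hFv : ∀ ℓ, F ℓ *ᵥ v = 0) :
    Function.Periodic (posteriorKernel y X σ2 lam d F) v := by
  intro β
  have hX : X *ᵥ (β + v) = X *ᵥ β := by
    rw [mulVec_add, add_eq_left]; exact funext fun i => hXd (.inl i)
  simp only [posteriorKernel, hX,
    structuredPenalty_periodic d F hF (fun k => hXd (.inr k)) hFv β]

theorem posteriorKernel_le (hσ2 : 0 < σ2) (β : n → ℝ) :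
    posteriorKernel y X σ2 lam d F β ≤ Real.exp (∑ i, (|y i| + σ2 / 2)) *
      Real.exp (-(min 1 lam * structuredPenalty (Sum.elim X d) F β)) := by
  have hX : ∑ i, |(X *ᵥ β) i| ≤
      (∑ i, (y i - (X *ᵥ β) i) ^ 2) / (2 * σ2) + ∑ i, (|y i| + σ2 / 2) := by
    rw [Finset.sum_div, ← Finset.sum_add_distrib]
    exact Finset.sum_le_sum fun i _ => abs_le_sq_div_add hσ2 (y i) _
  have hsplit : structuredPenalty (Sum.elim X d) F β =
      ∑ i, |(X *ᵥ β) i| + structuredPenalty d F β := by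
    simp only [structuredPenalty, Fintype.sum_sum_type, add_assoc]
    rfl
  have hmin : min 1 lam * structuredPenalty (Sum.elim X d) F β ≤
      ∑ i, |(X *ᵥ β) i| + lam * structuredPenalty d F β := by
    rw [hsplit, mul_add]
    gcongr
    · exact mul_le_of_le_one_left (by positivity) (min_le_left _ _)
    · exact structuredPenalty_nonneg d F β
    · exact min_le_right _ _
  rw [posteriorKernel, ← Real.exp_add, ← Real.exp_add, Real.exp_le_exp, neg_div]
  linarith

theorem integrable_posteriorKernel [MeasurableSpace (n → ℝ)] [BorelSpace (n → ℝ)]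
    (μ : Measure (n → ℝ)) [μ.IsAddHaarMeasure] (hσ2 : 0 < σ2) (hlam : 0 < lam)
    (hpos : ∀ β, β ≠ 0 → 0 < structuredPenalty (Sum.elim X d) F β) :
    Integrable (posteriorKernel y X σ2 lam d F) μ := by
  obtain ⟨c, hc, hcg⟩ := exists_pos_mul_norm_le (continuous_structuredPenalty _ F)
    (fun t β ht => structuredPenalty_smul _ F ht β) hpos
  have hm : 0 < min 1 lam := lt_min one_pos hlam
  refine ((integrable_exp_neg_mul_norm μ (mul_pos hm hc)).const_mul
    (Real.exp (∑ i, (|y i| + σ2 / 2)))).mono' ?_ (.of_forall fun β => ?_)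
  · have := continuous_structuredPenalty d F
    exact (by unfold posteriorKernel; fun_prop : Continuous _).aestronglyMeasurable
  rw [Real.norm_of_nonneg (posteriorKernel_pos y X σ2 lam d F β).le]
  refine (posteriorKernel_le y X σ2 lam d F hσ2 β).trans ?_
  gcongr _ * Real.exp (-?_)
  rw [mul_assoc]
  gcongr
  exact hcg β

end PosteriorKernel

theorem mulVec_of_sumElim_eq_zero_iff {m n ι κ : Type*} [Fintype n] (A : Matrix m n ℝ)
    (d : ι → n → ℝ) (F : κ → Matrix n n ℝ) (β : n → ℝ) :
    of (Sum.elim (fun i => A i) (Sum.elim d fun li : κ × n => F li.1 li.2)) *ᵥ β = 0 ↔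
      (∀ i, Sum.elim A d i ⬝ᵥ β = 0) ∧ ∀ ℓ, F ℓ *ᵥ β = 0 := by
  simp only [funext_iff, Sum.forall, Prod.forall, mulVec, of_apply, Sum.elim_inl, Sum.elim_inr,
    Pi.zero_apply, and_assoc]
  rfl

/-- Bayesian linear regression with a structured sparse prior: the posterior kernel is
integrable over ℝ^p iff the augmented design matrix (X stacked on top of D̄) has
full column rank `p`. -/
theorem linear_posterior_proper_iff_augmented_full_rank
    (N p K L : ℕ) (y : Fin N → ℝ) (X : Matrix (Fin N) (Fin p) ℝ)
    (σ2 : ℝ) (hσ2 : 0 < σ2) (lam : ℝ) (hlam : 0 < lam)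
    (d : Fin K → (Fin p → ℝ))
    (F : Fin L → Matrix (Fin p) (Fin p) ℝ)
    (hFsymm : ∀ ℓ, (F ℓ).IsSymm)
    (hFpsd : ∀ ℓ, (F ℓ).PosSemidef) :
    Integrable (fun β : Fin p → ℝ =>
        Real.exp (-(∑ n, (y n - (X *ᵥ β) n) ^ 2) / (2 * σ2)) *
          Real.exp (-(lam * ((∑ k, |d k ⬝ᵥ β|) +
            ∑ ℓ, Real.sqrt (β ⬝ᵥ (F ℓ) *ᵥ β))))) volume ↔
      (Matrix.of (Sum.elim (fun n => X n)
          (Sum.elim d (fun li : Fin L × Fin p => F li.1 li.2)))).rank = p := by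
  have hrank := rank_eq_card_iff_mulVec_eq_zero
    (of (Sum.elim (fun n => X n) (Sum.elim d fun li : Fin L × Fin p => F li.1 li.2)))
  rw [Fintype.card_fin] at hrank
  change Integrable (posteriorKernel y X σ2 lam d F) volume ↔ _
  simp only [hrank, mulVec_of_sumElim_eq_zero_iff]
  constructor
  · intro hint v ⟨hXd, hFv⟩
    by_contra hv
    exact not_integrable_of_periodic volume
      (posteriorKernel_periodic y X σ2 lam d F hFsymm hXd hFv) hv
      (fun β => (posteriorKernel_pos y X σ2 lam d F β).ne') hint
  · intro hinj
    refine integrable_posteriorKernel y X σ2 lam d F volume hσ2 hlam fun β hβ => ?_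
    refine (structuredPenalty_nonneg _ F β).lt_of_ne' fun h => hβ (hinj β ?_)
    exact (structuredPenalty_eq_zero_iff _ F hFpsd).1 h
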